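/- For fixed λ > 0, the function φ(λ, β) = N ln(1 + 1/λ) + N ln β − N ln λ + β S − 2 Σ_{i=1}^N ln(1 + X_i^β/λ), with S = Σ ln X_i and all X_i > 1, tends to −∞ as β → ∞. -/

import Mathlib

/-!
Since `log (1 + x) ≥ log x`, each term `2 log (1 + X_i^β / λ)` is at least `2 (β log X_i - log λ)`.
Hence `φ(λ, β) ≤ C + N log β - β S` with `C` independent of `β`, and the right-hand side tends
to `-∞` because `S > 0` and `log β = o(β)`.
-/

open Real Filter

lemma mul_log_sub_log_le_log_one_add_rpow_div {x c : ℝ} (hx : 0 < x) (hc : 0 < c) (β : ℝ) :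
    β * log x - log c ≤ log (1 + x ^ β / c) := by
  have hxβ : 0 < x ^ β := rpow_pos_of_pos hx β
  calc β * log x - log c = log (x ^ β / c) := by
        rw [log_div hxβ.ne' hc.ne', log_rpow hx]
    _ ≤ log (1 + x ^ β / c) := log_le_log (div_pos hxβ hc) (by linarith)

lemma tendsto_mul_log_sub_mul_atBot (a : ℝ) {b : ℝ} (hb : 0 < b) :
    Tendsto (fun x : ℝ => a * log x - x * b) atTop atBot := by
  have hrate : Tendsto (fun x : ℝ => a * (log x / x) - b) atTop (nhds (-b)) := by
    simpa using (isLittleO_log_id_atTop.tendsto_div_nhds_zero.const_mul a).sub_const b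
  refine (tendsto_id.atTop_mul_neg (neg_lt_zero.mpr hb) hrate).congr' ?_
  filter_upwards [eventually_gt_atTop 0] with x hx
  field_simp
  simp

/-- For fixed λ > 0 and data X_i > 1 (N ≥ 2), the objective
φ(λ, β) = N ln(1 + 1/λ) + N ln β − N ln λ + β S − 2 Σ ln(1 + X_i^β/λ),
with S = Σ ln X_i, tends to −∞ as β → ∞. -/
theorem phi_tendsto_atBot_atTop (N : ℕ) (hN : 2 ≤ N) (X : Fin N → ℝ) (hX : ∀ i, 1 < X i)
    (lam : ℝ) (hlam : 0 < lam) :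
    Tendsto (fun β : ℝ =>
        (N : ℝ) * Real.log (1 + 1 / lam) + (N : ℝ) * Real.log β - (N : ℝ) * Real.log lam +
          β * (∑ i, Real.log (X i)) - 2 * ∑ i, Real.log (1 + (X i) ^ β / lam))
      atTop atBot := by
  set S := ∑ i, log (X i)
  have hS : 0 < S :=
    Finset.sum_pos (fun i _ => log_pos (hX i)) ⟨⟨0, by omega⟩, Finset.mem_univ _⟩
  have hsum (β : ℝ) : β * S - N * log lam ≤ ∑ i, log (1 + X i ^ β / lam) := by
    calc β * S - N * log lam = ∑ i, (β * log (X i) - log lam) := by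
          simp [S, Finset.sum_sub_distrib, Finset.mul_sum]
      _ ≤ _ := Finset.sum_le_sum fun i _ =>
          mul_log_sub_log_le_log_one_add_rpow_div (one_pos.trans (hX i)) hlam β
  refine tendsto_atBot_mono (fun β => ?_) <| tendsto_atBot_add_const_left _
    (N * log (1 + 1 / lam) + N * log lam) (tendsto_mul_log_sub_mul_atBot N hS)
  linarith [hsum β]
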